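/- arXiv:2109.12570 — 2 statements merged into one kernel-verified Lean document; each statement's English description precedes it below -/
import Mathlib

section
/- For every positive integer n and integer k ≥ 0 with n even, the series ∑_{l=1}^∞ 1/(l·(n/2 + k + l)³) equals (8/(2k+n)) · ( H_{n/2+k}/(2k+n)² + (H^{(2)}_{n/2+k} − ζ(2))/(2(2k+n)) + (H^{(3)}_{n/2+k} − ζ(3))/4 ), where H_m^{(p)} denotes the m-th generalized harmonic number of order p and ζ is the Riemann zeta function. -/
/-- The `m`-th generalized harmonic number of order `p`. -/
noncomputable def genHarmonic (m p : ℕ) : ℝ := ∑ j ∈ Finset.range m, 1 / ((j : ℝ) + 1) ^ p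

noncomputable def zeta3 : ℝ := ∑' j : ℕ, 1 / ((j : ℝ) + 1) ^ 3

/-!
Writing `a = l + 1` and `m = n/2 + k`, partial fractions give
`1/(a (a+m)^3) = (1/a - 1/(a+m))/m^3 - 1/(m^2 (a+m)^2) - 1/(m (a+m)^3)`.
Summed over `l`, the first term telescopes to `H_m / m^3`, and the other two are tails
`ζ(p) - H_m^{(p)}` of the zeta series for `p = 2, 3`.
-/

open Finset Filter Topology

theorem hasSum_sub_nat_add_of_antitone {f : ℕ → ℝ} (hf : Antitone f)
    (hf0 : Tendsto f atTop (𝓝 0)) (m : ℕ) :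
    HasSum (fun n => f n - f (n + m)) (∑ i ∈ range m, f i) := by
  have hpartial : ∀ N, ∑ n ∈ range N, (f n - f (n + m))
      = ∑ i ∈ range m, f i - ∑ i ∈ range m, f (N + i) := by
    intro N
    have hN := sum_range_add f N m
    have hm := sum_range_add f m N
    simp only [sum_sub_distrib, add_comm N m, add_comm _ m] at *
    linarith
  have htail : Tendsto (fun N => ∑ i ∈ range m, f (N + i)) atTop (𝓝 0) := by
    simpa using tendsto_finsetSum (range m) fun i _ => hf0.comp (tendsto_add_atTop_nat i)
  rw [hasSum_iff_tendsto_nat_of_nonneg fun n => sub_nonneg.mpr (hf (Nat.le_add_right n m))]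
  simp only [hpartial]
  simpa using tendsto_const_nhds.sub htail

theorem hasSum_one_div_sub_one_div_add (m : ℕ) :
    HasSum (fun l : ℕ => 1 / ((l : ℝ) + 1) - 1 / ((l : ℝ) + m + 1)) (genHarmonic m 1) := by
  have hanti : Antitone fun l : ℕ => 1 / ((l : ℝ) + 1) := fun a b hab => by
    dsimp only
    gcongr
  have h := hasSum_sub_nat_add_of_antitone hanti tendsto_one_div_add_atTop_nhds_zero_nat m
  push_cast at h
  simpa [genHarmonic] using h

theorem hasSum_one_div_add_pow (m : ℕ) {p : ℕ} (hp : 1 < p) :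
    HasSum (fun l : ℕ => 1 / ((l : ℝ) + m + 1) ^ p)
      ((∑' j : ℕ, 1 / ((j : ℝ) + 1) ^ p) - genHarmonic m p) := by
  have hsum : Summable fun j : ℕ => 1 / ((j : ℝ) + 1) ^ p := by
    simpa using (summable_nat_add_iff 1).mpr (Real.summable_one_div_nat_pow.mpr hp)
  simpa [genHarmonic] using (hasSum_nat_add_iff' m).mpr hsum.hasSum

theorem tsum_one_div_add_one_sq : ∑' j : ℕ, 1 / ((j : ℝ) + 1) ^ 2 = Real.pi ^ 2 / 6 := by
  simpa using ((hasSum_nat_add_iff' 1).mpr hasSum_zeta_two).tsum_eq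

theorem one_div_mul_add_pow_three {a m : ℝ} (ha : a ≠ 0) (ham : a + m ≠ 0) (hm : m ≠ 0) :
    1 / (a * (a + m) ^ 3)
      = (1 / a - 1 / (a + m)) / m ^ 3 - 1 / (a + m) ^ 2 / m ^ 2 - 1 / (a + m) ^ 3 / m := by
  field_simp
  ring

theorem hasSum_one_div_mul_add_pow_three {m : ℕ} (hm : 0 < m) :
    HasSum (fun l : ℕ => 1 / (((l : ℝ) + 1) * ((m : ℝ) + ((l : ℝ) + 1)) ^ 3))
      (genHarmonic m 1 / (m : ℝ) ^ 3 - (Real.pi ^ 2 / 6 - genHarmonic m 2) / (m : ℝ) ^ 2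
        - (zeta3 - genHarmonic m 3) / m) := by
  have hsq := hasSum_one_div_add_pow m (p := 2) (by norm_num)
  have hcube := hasSum_one_div_add_pow m (p := 3) (by norm_num)
  rw [tsum_one_div_add_one_sq] at hsq
  refine ((((hasSum_one_div_sub_one_div_add m).div_const _).sub (hsq.div_const _)).sub
    (hcube.div_const (m : ℝ))).congr_fun fun l => ?_
  have hl : (l : ℝ) + 1 ≠ 0 := by positivity
  have hlm : (l : ℝ) + 1 + m ≠ 0 := by positivity
  rw [add_comm (m : ℝ), one_div_mul_add_pow_three hl hlm (by positivity)]
  ring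

theorem stmt_4 (n k : ℕ) (hn : Even n) (hpos : 0 < n) :
    (∑' l : ℕ, 1 / (((l : ℝ) + 1) * ((n : ℝ) / 2 + k + ((l : ℝ) + 1)) ^ 3))
      = (8 / (2 * (k : ℝ) + n)) *
        (genHarmonic (n / 2 + k) 1 / (2 * (k : ℝ) + n) ^ 2
          + (genHarmonic (n / 2 + k) 2 - Real.pi ^ 2 / 6) / (2 * (2 * (k : ℝ) + n))
          + (genHarmonic (n / 2 + k) 3 - zeta3) / 4) := by
  obtain ⟨t, rfl⟩ := hn
  have hhalf : ((t + t) / 2 + k : ℕ) = (t + k : ℕ) := by omega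
  have hcast : ((t + t : ℕ) : ℝ) / 2 + k = (t + k : ℕ) := by push_cast; ring
  have htwo : 2 * (k : ℝ) + (t + t : ℕ) = 2 * (t + k : ℕ) := by push_cast; ring
  have hm_pos : 0 < t + k := by omega
  rw [hcast, htwo, hhalf, (hasSum_one_div_mul_add_pow_three hm_pos).tsum_eq]
  have hm_ne : ((t + k : ℕ) : ℝ) ≠ 0 := by positivity
  field_simp
  ring
end

section
/- The first-order correction u₁(s) = −(6/7) · u̇₀(s) · log(cosh s), together with τ₀ = 10/7, solves the linear inhomogeneous ODE ü₁(s) − 2u₀(s)u₁(s) = (u₀(s) + τ₀)·u̇₀(s), where u₀(s) = 6 tanh²(s) − 4, and u̇₁(s), ü₁(s) → 0 as s → ±∞. -/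
/-!
Differentiating the soliton equation `ü₀ = u₀² - 4` shows that `v = u̇₀` solves the homogeneous
equation `v̈ = 2 u₀ v`. For `u₁ = c v L` with `L = log cosh` this gives
`ü₁ - 2 u₀ u₁ = c (2 v̇ L̇ + v L̈)`: the logarithm drops out, and with `L̇ = tanh`, `L̈ = sech²` the
right-hand side is a polynomial in `tanh` that matches `(u₀ + 10/7) u̇₀` exactly for `c = -6/7`.
Every derivative of `u₁` carries a factor `sech² = 1 - tanh²`, and `sech² · log cosh → 0`,
so `u̇₁` and `ü₁` vanish at `±∞`.
-/

open Filter

noncomputable def u₀ : ℝ → ℝ := fun s => 6 * Real.tanh s ^ 2 - 4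

noncomputable def u₁ : ℝ → ℝ := fun s => -(6 / 7) * deriv u₀ s * Real.log (Real.cosh s)

open Topology

namespace Real

theorem one_sub_tanh_sq (x : ℝ) : 1 - tanh x ^ 2 = (cosh x ^ 2)⁻¹ := by
  have hc := (cosh_pos x).ne'
  rw [tanh_eq_sinh_div_cosh]
  field_simp
  linarith [cosh_sq x]

theorem hasDerivAt_tanh (x : ℝ) : HasDerivAt tanh (1 - tanh x ^ 2) x := by
  have h := (hasDerivAt_sinh x).div (hasDerivAt_cosh x) (cosh_pos x).ne'
  rw [one_sub_tanh_sq, show tanh = sinh / cosh from funext tanh_eq_sinh_div_cosh]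
  refine h.congr_deriv ?_
  field_simp
  linarith [cosh_sq x]

theorem hasDerivAt_log_cosh (x : ℝ) : HasDerivAt (fun y => log (cosh y)) (tanh x) x := by
  simpa [tanh_eq_sinh_div_cosh] using (hasDerivAt_cosh x).log (cosh_pos x).ne'

theorem abs_le_cosh (x : ℝ) : |x| ≤ cosh x := by
  rw [← cosh_abs]
  exact (self_le_sinh_iff.mpr (abs_nonneg x)).trans (sinh_lt_cosh _).le

theorem tendsto_cosh_atTop : Tendsto cosh atTop atTop :=
  tendsto_atTop_mono abs_le_cosh tendsto_abs_atTop_atTop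

theorem tendsto_cosh_atBot : Tendsto cosh atBot atTop :=
  tendsto_atTop_mono abs_le_cosh tendsto_abs_atBot_atTop

theorem isBoundedUnder_comp_tanh {p : ℝ → ℝ} (hp : Continuous p) (l : Filter ℝ) :
    IsBoundedUnder (· ≤ ·) l ((‖·‖) ∘ fun x => p (tanh x)) := by
  obtain ⟨C, hC⟩ :=
    isCompact_Icc.exists_bound_of_continuousOn (hp.continuousOn (s := Set.Icc (-1) 1))
  exact isBoundedUnder_of ⟨C, fun x => hC _ ⟨(neg_one_lt_tanh x).le, (tanh_lt_one x).le⟩⟩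

variable {l : Filter ℝ}

theorem tendsto_one_sub_tanh_sq (hl : Tendsto cosh l atTop) :
    Tendsto (fun x => 1 - tanh x ^ 2) l (𝓝 0) := by
  simp only [one_sub_tanh_sq]
  exact (tendsto_pow_atTop two_ne_zero |>.comp hl).inv_tendsto_atTop

theorem tendsto_one_sub_tanh_sq_mul_log_cosh (hl : Tendsto cosh l atTop) :
    Tendsto (fun x => (1 - tanh x ^ 2) * log (cosh x)) l (𝓝 0) := by
  have h : Tendsto (fun y : ℝ => log y / y * y⁻¹) atTop (𝓝 0) := by
    simpa using isLittleO_log_id_atTop.tendsto_div_nhds_zero.mul tendsto_inv_atTop_zero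
  refine (h.comp hl).congr fun x => ?_
  simp only [Function.comp, one_sub_tanh_sq]
  ring

theorem tendsto_sech_sq_mul_log_cosh_add {p q : ℝ → ℝ} (hp : Continuous p) (hq : Continuous q)
    (hl : Tendsto cosh l atTop) :
    Tendsto (fun x => (1 - tanh x ^ 2) * (p (tanh x) * log (cosh x) + q (tanh x))) l (𝓝 0) := by
  have hlog := (tendsto_one_sub_tanh_sq_mul_log_cosh hl).zero_mul_isBoundedUnder_le
    (isBoundedUnder_comp_tanh hp l)
  have hsech := (tendsto_one_sub_tanh_sq hl).zero_mul_isBoundedUnder_le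
    (isBoundedUnder_comp_tanh hq l)
  have h := hlog.add hsech
  rw [zero_add] at h
  refine h.congr fun x => ?_
  ring

end Real

open Real

theorem hasDerivAt_u₀ (s : ℝ) : HasDerivAt u₀ (12 * tanh s * (1 - tanh s ^ 2)) s := by
  refine ((((hasDerivAt_tanh s).pow 2).const_mul 6).sub_const 4).congr_deriv ?_
  ring

theorem deriv_u₀ : deriv u₀ = fun s => 12 * tanh s * (1 - tanh s ^ 2) :=
  funext fun s => (hasDerivAt_u₀ s).deriv

theorem hasDerivAt_deriv_u₀ (s : ℝ) : HasDerivAt (deriv u₀) (u₀ s ^ 2 - 4) s := by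
  rw [deriv_u₀]
  have hT := hasDerivAt_tanh s
  refine ((hT.const_mul 12).mul ((hT.pow 2).const_sub 1)).congr_deriv ?_
  simp only [u₀, Pi.pow_apply]
  ring

theorem hasDerivAt_u₀_sq_sub_four (s : ℝ) :
    HasDerivAt (fun s => u₀ s ^ 2 - 4) (2 * u₀ s * deriv u₀ s) s := by
  refine (((hasDerivAt_u₀ s).pow 2).sub_const 4).congr_deriv ?_
  rw [deriv_u₀]
  ring

theorem hasDerivAt_u₁ (s : ℝ) :
    HasDerivAt u₁ (-(6 / 7) * ((u₀ s ^ 2 - 4) * log (cosh s) + deriv u₀ s * tanh s)) s := by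
  refine (((hasDerivAt_deriv_u₀ s).const_mul (-(6 / 7))).mul
    (hasDerivAt_log_cosh s)).congr_deriv ?_
  ring

theorem deriv_u₁ :
    deriv u₁ = fun s => -(6 / 7) * ((u₀ s ^ 2 - 4) * log (cosh s) + deriv u₀ s * tanh s) :=
  funext fun s => (hasDerivAt_u₁ s).deriv

theorem deriv_deriv_u₁ : deriv (deriv u₁) = fun s => -(6 / 7) *
    (2 * u₀ s * deriv u₀ s * log (cosh s) + 2 * (u₀ s ^ 2 - 4) * tanh s
      + deriv u₀ s * (1 - tanh s ^ 2)) := by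
  rw [deriv_u₁]
  refine funext fun s => HasDerivAt.deriv ?_
  refine ((((hasDerivAt_u₀_sq_sub_four s).mul (hasDerivAt_log_cosh s)).add
    ((hasDerivAt_deriv_u₀ s).mul (hasDerivAt_tanh s))).const_mul (-(6 / 7))).congr_deriv ?_
  ring

theorem tendsto_deriv_u₁ {l : Filter ℝ} (hl : Tendsto cosh l atTop) :
    Tendsto (deriv u₁) l (𝓝 0) := by
  have h := tendsto_sech_sq_mul_log_cosh_add (p := fun t => -(72 / 7) * (1 - 3 * t ^ 2))
    (q := fun t => -(72 / 7) * t ^ 2) (by fun_prop) (by fun_prop) hl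
  refine h.congr fun s => ?_
  simp only [deriv_u₁, deriv_u₀, u₀]
  ring

theorem tendsto_deriv_deriv_u₁ {l : Filter ℝ} (hl : Tendsto cosh l atTop) :
    Tendsto (deriv (deriv u₁)) l (𝓝 0) := by
  have h := tendsto_sech_sq_mul_log_cosh_add (p := fun t => -(144 / 7) * t * (6 * t ^ 2 - 4))
    (q := fun t => -(72 / 7) * t * (3 - 7 * t ^ 2)) (by fun_prop) (by fun_prop) hl
  refine h.congr fun s => ?_
  simp only [deriv_deriv_u₁, deriv_u₀, u₀]
  ring

theorem stmt_14 :
    (∀ s : ℝ, deriv (deriv u₁) s - 2 * u₀ s * u₁ s = (u₀ s + 10 / 7) * deriv u₀ s) ∧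
    Tendsto (deriv u₁) atTop (nhds 0) ∧ Tendsto (deriv u₁) atBot (nhds 0) ∧
    Tendsto (deriv (deriv u₁)) atTop (nhds 0) ∧
    Tendsto (deriv (deriv u₁)) atBot (nhds 0) := by
  refine ⟨fun s => ?_, tendsto_deriv_u₁ tendsto_cosh_atTop, tendsto_deriv_u₁ tendsto_cosh_atBot,
    tendsto_deriv_deriv_u₁ tendsto_cosh_atTop, tendsto_deriv_deriv_u₁ tendsto_cosh_atBot⟩
  simp only [deriv_deriv_u₁, u₁, deriv_u₀, u₀]
  ring
end
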